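/- arXiv:1903.09315 — 4 statements merged into one kernel-verified Lean document; each statement's English description precedes it below -/
import Mathlib

section
/- In the masking protocol, if each agent i with input s_i ∈ [0, 1/n) computes effective input s̃_i = frac(s_i + a_i) where the masks satisfy frac(Σ_i a_i) = 0 and a_i ∈ [0,1), then frac(Σ_{i=1}^n s̃_i) = Σ_{i=1}^n s_i. -/
open Finset

/- The masks contribute the integer `∑ i, a i` and each `frac` only subtracts an integer, so
`∑ i, stilde i` and `∑ i, s i` differ by an integer; the latter already lies in `[0, 1)`. -/

theorem Int.fract_sum_fract_add_of_fract_sum_eq_zero {ι R : Type*} [Ring R] [LinearOrder R]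
    [IsStrictOrderedRing R] [FloorRing R] (t : Finset ι) (s a : ι → R)
    (ha : Int.fract (∑ i ∈ t, a i) = 0) :
    Int.fract (∑ i ∈ t, Int.fract (s i + a i)) = Int.fract (∑ i ∈ t, s i) := by
  obtain ⟨k, hk⟩ := Int.fract_eq_zero_iff.1 ha
  refine Int.fract_eq_fract.2 ⟨k - ∑ i ∈ t, ⌊s i + a i⌋, ?_⟩
  simp only [Int.fract, sum_sub_distrib, sum_add_distrib]
  push_cast
  rw [hk]
  abel

theorem Finset.sum_lt_one_of_forall_lt_one_div_card {ι R : Type*} [Fintype ι] [Field R]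
    [LinearOrder R] [IsStrictOrderedRing R] (s : ι → R)
    (hs : ∀ i, s i < 1 / Fintype.card ι) : ∑ i, s i < 1 := by
  cases isEmpty_or_nonempty ι
  · simp
  calc ∑ i, s i < ∑ _i : ι, (1 / Fintype.card ι : R) :=
        sum_lt_sum_of_nonempty univ_nonempty fun i _ => hs i
    _ = 1 := by simp

theorem fract_sum_effective_inputs_general (n : ℕ)
    (s a stilde : Fin n → ℝ)
    (hs : ∀ i, s i ∈ Set.Ico (0 : ℝ) (1 / n))
    (hafrac : Int.fract (∑ i, a i) = 0)
    (hst : ∀ i, stilde i = Int.fract (s i + a i)) :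
    Int.fract (∑ i, stilde i) = ∑ i, s i := by
  have hs_nonneg : 0 ≤ ∑ i, s i := sum_nonneg fun i _ => (hs i).1
  have hs_lt_one : ∑ i, s i < 1 :=
    sum_lt_one_of_forall_lt_one_div_card s fun i => by simpa using (hs i).2
  simp only [hst]
  rw [Int.fract_sum_fract_add_of_fract_sum_eq_zero univ s a hafrac]
  exact Int.fract_eq_self.2 ⟨hs_nonneg, hs_lt_one⟩

theorem fract_sum_effective_inputs (n : ℕ) (hn : 1 ≤ n)
    (s a stilde : Fin n → ℝ)
    (hs : ∀ i, s i ∈ Set.Ico (0 : ℝ) (1 / n))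
    (ha : ∀ i, a i ∈ Set.Ico (0 : ℝ) 1)
    (hafrac : Int.fract (∑ i, a i) = 0)
    (hst : ∀ i, stilde i = Int.fract (s i + a i)) :
    Int.fract (∑ i, stilde i) = ∑ i, s i :=
  fract_sum_effective_inputs_general n s a stilde hs hafrac hst
end

section
/- Let G be a connected finite simple graph on n ≥ 1 nodes with oriented incidence matrix ∇, and let b = (b_e)_{e ∈ E} be i.i.d. uniform random variables on [0,1). Then the random vector a = frac(∇ · b) (fractional part taken coordinatewise) is uniformly distributed on the set {a ∈ [0,1)ⁿ : frac(Σ_i a_i) = 0}. -/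
open MeasureTheory ProbabilityTheory

/-- The edge set of a simple graph `G`, as ordered pairs `(i, j)` with `i < j`. -/
abbrev OrientedEdges {V : Type*} [LinearOrder V] (G : SimpleGraph V) : Type _ :=
  {p : V × V // p.1 < p.2 ∧ G.Adj p.1 p.2}

/-- The oriented incidence matrix of a simple graph. -/
def incidenceMatrix {V : Type*} [LinearOrder V] (G : SimpleGraph V) :
    Matrix V (OrientedEdges G) ℝ :=
  fun i e => if i = e.val.1 then 1 else if i = e.val.2 then -1 else 0

/-! Reduced mod 1, `a` is the image of the torus point `(b_e mod 1)_e`, which is Haar distributed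
on `(ℝ/ℤ)^E`, under the continuous homomorphism of tori induced by the integer matrix `∇`.
The pushforward of a Haar measure under a homomorphism is invariant under translation by the
image, and for connected `G` that image is exactly the zero-sum subgroup: the edge `uv` is sent to
`δ_u - δ_v`, and a path from `u` to `v` writes `δ_u - δ_v` as a sum of such terms. -/

namespace Matrix

variable {m n A : Type*} [Fintype n] [AddCommGroup A]

def intMulVecHom (M : Matrix m n ℤ) : (n → A) →+ (m → A) where
  toFun t i := ∑ j, M i j • t j
  map_zero' := by ext; simp
  map_add' t s := by ext; simp [smul_add, Finset.sum_add_distrib]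

variable (M : Matrix m n ℤ)

lemma intMulVecHom_apply (t : n → A) (i : m) : M.intMulVecHom t i = ∑ j, M i j • t j := rfl

lemma intMulVecHom_comp {R : Type*} [Ring R] (f : R →+ A) (x : n → R) :
    M.intMulVecHom (f ∘ x) = f ∘ (M.map (↑) *ᵥ x) := by
  ext i
  simp [intMulVecHom_apply, mulVec, dotProduct, map_sum, ← zsmul_eq_mul, map_zsmul]

lemma intMulVecHom_single [DecidableEq n] (j : n) (a : A) :
    M.intMulVecHom (Pi.single j a) = fun i => M i j • a := by
  ext i
  simp [intMulVecHom_apply, Pi.single_apply]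

lemma sum_intMulVecHom [Fintype m] (t : n → A) :
    ∑ i, M.intMulVecHom t i = ∑ j, (∑ i, M i j) • t j := by
  simp only [intMulVecHom_apply, Finset.sum_smul]
  exact Finset.sum_comm

lemma continuous_intMulVecHom [TopologicalSpace A] [IsTopologicalAddGroup A] :
    Continuous (M.intMulVecHom : (n → A) → (m → A)) :=
  continuous_pi fun i => continuous_finsetSum _ fun j _ =>
    (continuous_zsmul (M i j)).comp (continuous_apply j)

end Matrix

section Incidence

variable {V A : Type*} [LinearOrder V] (G : SimpleGraph V) [AddCommGroup A]

def intIncidenceMatrix : Matrix V (OrientedEdges G) ℤ :=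
  fun i e => if i = e.val.1 then 1 else if i = e.val.2 then -1 else 0

lemma intIncidenceMatrix_map_intCast : (intIncidenceMatrix G).map (↑) = incidenceMatrix G := by
  ext i e
  simp only [Matrix.map_apply, intIncidenceMatrix, incidenceMatrix]
  split_ifs <;> simp

variable [Fintype V] [DecidableRel G.Adj]

lemma intMulVecHom_intIncidenceMatrix_single (e : OrientedEdges G) (a : A) :
    (intIncidenceMatrix G).intMulVecHom (Pi.single e a) =
      Pi.single e.val.1 a - Pi.single e.val.2 a := by
  have hne : e.val.1 ≠ e.val.2 := e.prop.1.ne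
  ext i
  rw [Matrix.intMulVecHom_single]
  simp only [intIncidenceMatrix, Pi.sub_apply, Pi.single_apply]
  split_ifs <;> simp_all

lemma sum_intIncidenceMatrix (e : OrientedEdges G) : ∑ i, intIncidenceMatrix G i e = 0 := by
  have h := congrArg (fun h => ∑ i, h i) (intMulVecHom_intIncidenceMatrix_single G e (1 : ℤ))
  simpa [Matrix.intMulVecHom_single, e.prop.1.ne] using h

lemma single_sub_single_mem_range_of_adj {u v : V} (huv : G.Adj u v) (a : A) :
    (Pi.single u a - Pi.single v a : V → A) ∈ (intIncidenceMatrix G).intMulVecHom.range := by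
  rcases huv.ne.lt_or_gt with h | h
  · exact ⟨Pi.single ⟨(u, v), h, huv⟩ a, intMulVecHom_intIncidenceMatrix_single G _ a⟩
  · rw [← neg_sub]
    exact neg_mem
      ⟨Pi.single ⟨(v, u), h, huv.symm⟩ a, intMulVecHom_intIncidenceMatrix_single G _ a⟩

lemma single_sub_single_mem_range_of_reachable {u v : V} (huv : G.Reachable u v) (a : A) :
    (Pi.single u a - Pi.single v a : V → A) ∈ (intIncidenceMatrix G).intMulVecHom.range := by
  obtain ⟨w⟩ := huv
  induction w with
  | nil => simp
  | @cons u w v hadj _ ih =>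
    rw [← sub_add_sub_cancel _ (Pi.single w a)]
    exact add_mem (single_sub_single_mem_range_of_adj G hadj a) ih

lemma mem_range_intMulVecHom_intIncidenceMatrix_iff (hG : G.Connected) {h : V → A} :
    h ∈ (intIncidenceMatrix G).intMulVecHom.range ↔ ∑ i, h i = 0 := by
  constructor
  · rintro ⟨t, rfl⟩
    simp [Matrix.sum_intMulVecHom, sum_intIncidenceMatrix]
  · intro hh
    obtain ⟨v⟩ := hG.nonempty
    have hdecomp : h = ∑ u, (Pi.single u (h u) - Pi.single v (h u)) := by
      have hv : ∑ u, (Pi.single v (h u) : V → A) = Pi.single v (∑ u, h u) :=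
        (map_sum (AddMonoidHom.single (fun _ => A) v) h _).symm
      rw [Finset.sum_sub_distrib, Finset.univ_sum_single, hv, hh, Pi.single_zero, sub_zero]
    rw [hdecomp]
    exact sum_mem fun u _ => single_sub_single_mem_range_of_reachable G (hG u v) (h u)

end Incidence

lemma MeasureTheory.Measure.map_add_right_map_eq_of_mem_range {G H : Type*}
    [AddGroup G] [AddGroup H] [MeasurableSpace G] [MeasurableAdd G] [MeasurableSpace H]
    [MeasurableAdd H]
    (μ : Measure G) [μ.IsAddRightInvariant] {φ : G →+ H} (hφ : Measurable φ) {h : H}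
    (hh : h ∈ φ.range) : (μ.map φ).map (· + h) = μ.map φ := by
  obtain ⟨c, rfl⟩ := hh
  have hcomm : (· + φ c) ∘ φ = φ ∘ (· + c) := by
    funext g
    simp
  rw [Measure.map_map (measurable_add_const _) hφ, hcomm,
    ← Measure.map_map hφ (measurable_add_const c), map_add_right_eq_self]

lemma AddCircle.map_coe_restrict_Ico_eq_volume (p : ℝ) [Fact (0 < p)] (t : ℝ) :
    (volume.restrict (Set.Ico t (t + p))).map ((↑) : ℝ → AddCircle p) = volume := by
  rw [Measure.restrict_congr_set Ico_ae_eq_Ioc]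
  exact (AddCircle.measurePreserving_mk p t).map_eq

lemma ProbabilityTheory.iIndepFun.map_coe_addCircle_eq_volume {ι Ω : Type*} [Fintype ι]
    [MeasurableSpace Ω] {μ : Measure Ω} {p : ℝ} [Fact (0 < p)] {t : ℝ} {X : ι → Ω → ℝ}
    (hX : ∀ i, Measurable (X i)) (hind : iIndepFun X μ)
    (hunif : ∀ i, μ.map (X i) = volume.restrict (Set.Ico t (t + p))) :
    μ.map (fun ω i => (X i ω : AddCircle p)) = volume := by
  have hmeas : ∀ i, Measurable fun ω => (X i ω : AddCircle p) :=
    fun i => AddCircle.measurable_mk'.comp (hX i)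
  rw [(hind.comp _ fun _ => AddCircle.measurable_mk').map_fun_eq_pi_map
    fun i => (hmeas i).aemeasurable, volume_pi]
  congr 1
  funext i
  change μ.map (((↑) : ℝ → AddCircle p) ∘ X i) = _
  rw [← Measure.map_map AddCircle.measurable_mk' (hX i), hunif,
    AddCircle.map_coe_restrict_Ico_eq_volume]

/-- If `G` is connected and the edge values `b_e` are i.i.d. uniform on `[0,1)`, then
`a = frac(∇ ⬝ b)` is uniformly distributed on `{a ∈ [0,1)ⁿ : frac (∑ i, a i) = 0}`:
viewing `a` as a point of the torus `(ℝ/ℤ)ⁿ`, its law is supported on the subgroup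
`H = {a : ∑ i, a i = 0}` and is invariant under translation by every element of `H`,
i.e. it is the Haar (uniform) probability measure of `H`. -/
theorem mask_uniform_on_zero_sum_subgroup
    {V : Type*} [Fintype V] [LinearOrder V]
    (G : SimpleGraph V) [DecidableRel G.Adj] (hG : G.Connected)
    {Ω : Type*} [MeasureSpace Ω] [IsProbabilityMeasure (ℙ : Measure Ω)]
    (B : Ω → OrientedEdges G → ℝ)
    (hBmeas : ∀ e, Measurable fun ω => B ω e)
    (hBindep : iIndepFun (fun e ω => B ω e) ℙ)
    (hBunif : ∀ e, Measure.map (fun ω => B ω e) ℙ = volume.restrict (Set.Ico (0:ℝ) 1))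
    (A : Ω → V → AddCircle (1 : ℝ))
    (hA : ∀ ω i, A ω i = ((∑ e, incidenceMatrix G i e * B ω e : ℝ) : AddCircle (1 : ℝ))) :
    (Measure.map A ℙ) {a : V → AddCircle (1 : ℝ) | ∑ i, a i = 0} = 1 ∧
    ∀ h : V → AddCircle (1 : ℝ), (∑ i, h i = 0) →
      Measure.map (fun a => a + h) (Measure.map A ℙ) = Measure.map A ℙ := by
  set φ := (intIncidenceMatrix G).intMulVecHom (A := AddCircle (1 : ℝ))
  set T : Ω → OrientedEdges G → AddCircle (1 : ℝ) := fun ω e => B ω e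
  have hφ : Measurable φ := (Matrix.continuous_intMulVecHom _).measurable
  have hT : Measurable T :=
    measurable_pi_lambda _ fun e => AddCircle.measurable_mk'.comp (hBmeas e)
  have hAφT : A = φ ∘ T := by
    funext ω
    have hcomp := (intIncidenceMatrix G).intMulVecHom_comp
      (QuotientAddGroup.mk' (AddSubgroup.zmultiples (1 : ℝ))) (B ω)
    rw [intIncidenceMatrix_map_intCast] at hcomp
    exact (funext (hA ω)).trans hcomp.symm
  have hlaw : Measure.map A ℙ = Measure.map φ volume := by
    rw [hAφT, ← Measure.map_map hφ hT,
      hBindep.map_coe_addCircle_eq_volume (t := 0) hBmeas (by simpa only [zero_add] using hBunif)]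
  refine ⟨?_, fun h hh => ?_⟩
  · have hS : MeasurableSet {a : V → AddCircle (1 : ℝ) | ∑ i, a i = 0} :=
      (isClosed_eq (continuous_finsetSum _ fun i _ => continuous_apply i)
        continuous_const).measurableSet
    have hpre : A ⁻¹' {a | ∑ i, a i = 0} = Set.univ := by
      ext ω
      simpa [hAφT] using (mem_range_intMulVecHom_intIncidenceMatrix_iff G hG).1 ⟨T ω, rfl⟩
    rw [Measure.map_apply (hAφT ▸ hφ.comp hT) hS, hpre, measure_univ]
  · rw [hlaw]
    exact Measure.map_add_right_map_eq_of_mem_range volume hφ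
      ((mem_range_intMulVecHom_intIncidenceMatrix_iff G hG).2 hh)
end

section
/- Let G be a connected finite simple graph on n nodes, let s ∈ [0,1/n)ⁿ be fixed inputs, and let a = frac(∇·b) with b = (b_e) i.i.d. uniform on [0,1). Then the effective inputs s̃_i = frac(s_i + a_i) are uniformly distributed on the set {x ∈ [0,1)ⁿ : frac(Σ_i x_i) = Σ_i s_i}. -/
open MeasureTheory ProbabilityTheory

/-!
Reduce everything mod 1. The noise `b` becomes a Haar-distributed point of the torus `𝕋^E`,
and the effective inputs become `s + ∂ b`, where `∂ : 𝕋^E → 𝕋^V`, `∂ 1ₑ = 1ᵢ - 1ⱼ` for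
`e = (i, j)`, is the map the incidence matrix induces on the torus. Every boundary has
coordinate sum `0`, so the law lives on the coset. For connected `G` every `h` with coordinate
sum `0` is a boundary `∂ τ` (telescope along paths to a fixed vertex), so translating the
effective inputs by `h` amounts to translating `b` by `τ`, which preserves Haar measure.
-/

section Boundary

variable {V : Type*} [Fintype V] [LinearOrder V] (G : SimpleGraph V) [DecidableRel G.Adj]
  (A : Type*) [AddCommGroup A]

def boundary : (OrientedEdges G → A) →+ (V → A) where
  toFun y := ∑ e, (Pi.single e.1.1 (y e) - Pi.single e.1.2 (y e))
  map_zero' := by simp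
  map_add' y z := by
    simp only [Pi.add_apply, Pi.single_add, ← Finset.sum_add_distrib]
    exact Finset.sum_congr rfl fun _ _ => by abel

variable {G A}

theorem boundary_apply (y : OrientedEdges G → A) :
    boundary G A y = ∑ e, (Pi.single e.1.1 (y e) - Pi.single e.1.2 (y e)) :=
  rfl

theorem boundary_single (e : OrientedEdges G) (a : A) :
    boundary G A (Pi.single e a) = Pi.single e.1.1 a - Pi.single e.1.2 a := by
  rw [boundary_apply, Finset.sum_eq_single e] <;> simp +contextual

theorem sum_boundary_apply (y : OrientedEdges G → A) : ∑ i, boundary G A y i = 0 := by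
  simp [boundary_apply, Finset.sum_apply, Finset.sum_comm (γ := V)]

theorem exists_boundary_eq_single_sub_single {u v : V} (h : G.Reachable u v) (a : A) :
    ∃ y, boundary G A y = Pi.single u a - Pi.single v a := by
  obtain ⟨p⟩ := h
  induction p with
  | nil => exact ⟨0, by simp⟩
  | @cons u w v huw _ ih =>
    obtain ⟨y, hy⟩ := ih
    obtain ⟨z, hz⟩ : ∃ z, boundary G A z = Pi.single u a - Pi.single w a := by
      rcases huw.ne.lt_or_gt with hlt | hlt
      · exact ⟨Pi.single ⟨(u, w), hlt, huw⟩ a, boundary_single _ _⟩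
      · refine ⟨Pi.single ⟨(w, u), hlt, huw.symm⟩ (-a), ?_⟩
        rw [boundary_single, Pi.single_neg, Pi.single_neg]
        abel
    exact ⟨z + y, by rw [map_add, hy, hz]; abel⟩

theorem exists_boundary_eq (hG : G.Connected) {x : V → A} (hx : ∑ i, x i = 0) :
    ∃ y, boundary G A y = x := by
  obtain ⟨v⟩ := hG.nonempty
  choose y hy using fun u => exists_boundary_eq_single_sub_single (hG.preconnected u v) (x u)
  refine ⟨∑ u, y u, ?_⟩
  have hv : ∑ u, (Pi.single v (x u) : V → A) = Pi.single v (∑ u, x u) :=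
    (map_sum (AddMonoidHom.single (fun _ : V => A) v) x Finset.univ).symm
  rw [map_sum, Finset.sum_congr rfl fun u _ => hy u, Finset.sum_sub_distrib,
    Finset.univ_sum_single, hv, hx, Pi.single_zero, sub_zero]

theorem boundary_comp {B : Type*} [AddCommGroup B] (f : A →+ B) (y : OrientedEdges G → A) :
    boundary G B (f ∘ y) = f ∘ boundary G A y := by
  ext i
  simp [boundary_apply, Finset.sum_apply, Pi.single_apply, apply_ite f]

theorem incidenceMatrix_mulVec (b : OrientedEdges G → ℝ) :
    (incidenceMatrix G).mulVec b = boundary G ℝ b := by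
  funext i
  simp only [Matrix.mulVec, dotProduct, incidenceMatrix, boundary_apply, Finset.sum_apply,
    Pi.sub_apply, Pi.single_apply]
  refine Finset.sum_congr rfl fun e _ => ?_
  have := e.2.1.ne
  split_ifs <;> simp_all

theorem continuous_boundary [TopologicalSpace A] [IsTopologicalAddGroup A] :
    Continuous (boundary G A) := by
  show Continuous fun y : OrientedEdges G → A =>
    ∑ e, (Pi.single e.1.1 (y e) - Pi.single e.1.2 (y e) : V → A)
  refine continuous_finsetSum _ fun e _ => Continuous.sub ?_ ?_ <;>
    exact (continuous_single _).comp (continuous_apply e)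

theorem coe_incidenceMatrix_mulVec (T : ℝ) (b : OrientedEdges G → ℝ) :
    (fun i => ((incidenceMatrix G).mulVec b i : AddCircle T)) =
      boundary G (AddCircle T) fun e => (b e : AddCircle T) := by
  rw [incidenceMatrix_mulVec]
  exact (boundary_comp (QuotientAddGroup.mk' _) b).symm

end Boundary

theorem map_coe_volume_restrict_Ico (T : ℝ) [Fact (0 < T)] (t : ℝ) :
    (volume.restrict (Set.Ico t (t + T))).map ((↑) : ℝ → AddCircle T) = volume := by
  rw [Measure.restrict_congr_set Ico_ae_eq_Ioc]
  exact (AddCircle.measurePreserving_mk T t).map_eq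

theorem map_coe_eq_volume_of_iIndepFun {ι Ω : Type*} [Fintype ι] [MeasurableSpace Ω]
    {μ : Measure Ω} [IsProbabilityMeasure μ] {X : ι → Ω → ℝ} (hindep : iIndepFun X μ)
    (hunif : ∀ i, μ.map (X i) = volume.restrict (Set.Ico 0 1)) :
    μ.map (fun ω i => (X i ω : AddCircle (1 : ℝ))) = volume := by
  have hX (i : ι) : AEMeasurable (X i) μ := by
    refine AEMeasurable.of_map_ne_zero ?_
    rw [hunif i]
    simp
  have hcoe (i : ι) : μ.map (fun ω => (X i ω : AddCircle (1 : ℝ))) = volume := by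
    change μ.map (((↑) : ℝ → AddCircle (1 : ℝ)) ∘ X i) = volume
    rw [← AEMeasurable.map_map_of_aemeasurable AddCircle.measurable_mk'.aemeasurable (hX i),
      hunif i]
    simpa using map_coe_volume_restrict_Ico 1 0
  calc μ.map (fun ω i => (X i ω : AddCircle (1 : ℝ)))
      = Measure.pi fun i => μ.map fun ω => (X i ω : AddCircle (1 : ℝ)) :=
        (hindep.comp _ fun _ => AddCircle.measurable_mk').map_fun_eq_pi_map
          fun i => AddCircle.measurable_mk'.comp_aemeasurable (hX i)
    _ = volume := by simp only [hcoe]; rfl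

theorem map_add_right_map_const_add_hom_eq_self {M N : Type*} [AddGroup M] [AddGroup N]
    [MeasurableSpace M] [MeasurableSpace N] [MeasurableAdd M] [MeasurableAdd N]
    (μ : Measure M) [μ.IsAddRightInvariant] (φ : M →+ N) (hφ : Measurable φ) (c : N) (τ : M) :
    (μ.map fun y => c + φ y).map (· + φ τ) = μ.map fun y => c + φ y := by
  have hshift : (fun y => c + φ y + φ τ) = (fun y => c + φ y) ∘ (· + τ) := by
    funext y
    simp [add_assoc]
  rw [Measure.map_map (measurable_add_const _) (hφ.const_add c), Function.comp_def, hshift,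
    ← Measure.map_map (hφ.const_add c) (measurable_add_const _), map_add_right_eq_self]

/-- Uniformity on the coset is encoded by its two defining properties: the law gives the coset
full measure and is invariant under translation by the subgroup `{∑ i, x i = 0}`. -/
theorem effective_inputs_uniform_on_coset_general
    {V : Type*} [Fintype V] [LinearOrder V]
    (G : SimpleGraph V) [DecidableRel G.Adj] (hG : G.Connected)
    (s : V → ℝ)
    {Ω : Type*} [MeasureSpace Ω] [IsProbabilityMeasure (ℙ : Measure Ω)]
    (B : Ω → OrientedEdges G → ℝ)
    (hBindep : iIndepFun (fun e ω => B ω e) ℙ)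
    (hBunif : ∀ e, Measure.map (fun ω => B ω e) ℙ = volume.restrict (Set.Ico (0:ℝ) 1))
    (a : Ω → V → ℝ)
    (ha : ∀ ω i, a ω i = Int.fract (∑ e, incidenceMatrix G i e * B ω e))
    (S : Ω → V → AddCircle (1 : ℝ))
    (hS : ∀ ω i, S ω i = ((s i + a ω i : ℝ) : AddCircle (1 : ℝ))) :
    (Measure.map S ℙ)
        {x : V → AddCircle (1 : ℝ) | ∑ i, x i = ((∑ i, s i : ℝ) : AddCircle (1 : ℝ))} = 1 ∧
    ∀ h : V → AddCircle (1 : ℝ), (∑ i, h i = 0) →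
      Measure.map (fun x => x + h) (Measure.map S ℙ) = Measure.map S ℙ := by
  set ψ : (OrientedEdges G → AddCircle (1 : ℝ)) → V → AddCircle (1 : ℝ) :=
    fun y => (fun i => (s i : AddCircle (1 : ℝ))) + boundary G _ y
  have hψ : Measurable ψ :=
    (continuous_const.add (continuous_boundary (G := G) (A := AddCircle (1 : ℝ)))).measurable
  have hSψ : S = ψ ∘ fun ω e => (B ω e : AddCircle (1 : ℝ)) := by
    funext ω i
    rw [hS, ha, AddCircle.coe_add, AddCircle.coe_fract]
    exact congrArg (_ + ·) (congrFun (coe_incidenceMatrix_mulVec 1 (B ω)) i)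
  have hnoise := map_coe_eq_volume_of_iIndepFun hBindep hBunif
  have hlaw : Measure.map S ℙ = volume.map ψ := by
    rw [hSψ, ← AEMeasurable.map_map_of_aemeasurable hψ.aemeasurable
      (AEMeasurable.of_map_ne_zero (by rw [hnoise]; exact NeZero.ne _)), hnoise]
  rw [hlaw]
  refine ⟨?_, fun h hh => ?_⟩
  · have hψ_coset (y) : ∑ i, ψ y i = ((∑ i, s i : ℝ) : AddCircle (1 : ℝ)) := by
      simp [ψ, Finset.sum_add_distrib, sum_boundary_apply, QuotientAddGroup.mk_sum]
    rw [Measure.map_apply hψ (measurableSet_eq_fun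
      (Finset.measurable_sum _ fun i _ => measurable_pi_apply i) measurable_const)]
    simp [Set.preimage, hψ_coset, volume_pi, Measure.pi_univ]
  · obtain ⟨τ, rfl⟩ := exists_boundary_eq hG hh
    exact map_add_right_map_const_add_hom_eq_self _ _ continuous_boundary.measurable _ τ

/-- For a connected graph `G`, fixed inputs `s ∈ [0,1/n)ⁿ`, masks `a = frac(∇ ⬝ b)` with
`b` i.i.d. uniform on `[0,1)`, the effective inputs `s̃ᵢ = frac(sᵢ + aᵢ)`, viewed in the
torus `(ℝ/ℤ)ⁿ`, are uniformly distributed on the coset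
`{x : ∑ i, x i = ∑ i, s i}` of the subgroup `{∑ x i = 0}`: their law gives that coset
full measure and is invariant under translation by any element of the subgroup,
which characterizes the Haar measure of the coset. -/
theorem effective_inputs_uniform_on_coset
    {V : Type*} [Fintype V] [LinearOrder V]
    (G : SimpleGraph V) [DecidableRel G.Adj] (hG : G.Connected)
    (s : V → ℝ) (hs : ∀ i, s i ∈ Set.Ico (0 : ℝ) (1 / Fintype.card V))
    {Ω : Type*} [MeasureSpace Ω] [IsProbabilityMeasure (ℙ : Measure Ω)]
    (B : Ω → OrientedEdges G → ℝ)
    (hBmeas : ∀ e, Measurable fun ω => B ω e)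
    (hBindep : iIndepFun (fun e ω => B ω e) ℙ)
    (hBunif : ∀ e, Measure.map (fun ω => B ω e) ℙ = volume.restrict (Set.Ico (0:ℝ) 1))
    (a : Ω → V → ℝ)
    (ha : ∀ ω i, a ω i = Int.fract (∑ e, incidenceMatrix G i e * B ω e))
    (S : Ω → V → AddCircle (1 : ℝ))
    (hS : ∀ ω i, S ω i = ((s i + a ω i : ℝ) : AddCircle (1 : ℝ))) :
    (Measure.map S ℙ)
        {x : V → AddCircle (1 : ℝ) | ∑ i, x i = ((∑ i, s i : ℝ) : AddCircle (1 : ℝ))} = 1 ∧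
    ∀ h : V → AddCircle (1 : ℝ), (∑ i, h i = 0) →
      Measure.map (fun x => x + h) (Measure.map S ℙ) = Measure.map S ℙ :=
  effective_inputs_uniform_on_coset_general G hG s B hBindep hBunif a ha S hS
end

section
/- Let h_i : ℝ → ℝ for i = 1,…,n satisfy h_i(s_i) ∈ [0,1/n) for the given inputs s_i, and let masks a_i ∈ [0,1) satisfy frac(Σ_i a_i) = 0. Define h̃_i = frac(h_i(s_i) + a_i). Then frac(Σ_i h̃_i) = Σ_i h_i(s_i), and consequently for any g : ℝ → ℝ, g(frac(Σ_i h̃_i)) = g(Σ_i h_i(s_i)). -/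
open Finset

theorem Int.fract_sum_fract {ι R : Type*} [Ring R] [LinearOrder R] [IsStrictOrderedRing R]
    [FloorRing R] (s : Finset ι) (f : ι → R) :
    Int.fract (∑ i ∈ s, Int.fract (f i)) = Int.fract (∑ i ∈ s, f i) := by
  have hsum : ∑ i ∈ s, Int.fract (f i) = ∑ i ∈ s, f i - ((∑ i ∈ s, ⌊f i⌋ : ℤ) : R) := by
    simp only [Int.fract, sum_sub_distrib, Int.cast_sum]
  rw [hsum, Int.fract_sub_intCast]

theorem Int.fract_add_of_fract_eq_zero {R : Type*} [Ring R] [LinearOrder R]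
    [IsStrictOrderedRing R] [FloorRing R] (a : R) {b : R} (hb : Int.fract b = 0) :
    Int.fract (a + b) = Int.fract a := by
  obtain ⟨m, rfl⟩ := Int.fract_eq_zero_iff.1 hb
  exact Int.fract_add_intCast a m

theorem sum_lt_one_of_lt_inv_card {ι : Type*} [Fintype ι] (x : ι → ℝ)
    (hx : ∀ i, x i < 1 / Fintype.card ι) : ∑ i, x i < 1 := by
  rcases isEmpty_or_nonempty ι with hι | hι
  · simp
  · calc ∑ i, x i < ∑ _i : ι, (1 / Fintype.card ι : ℝ) :=
          sum_lt_sum_of_nonempty univ_nonempty fun i _ => hx i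
      _ = 1 := by simp

theorem fract_sum_effective_function_values_general (n : ℕ)
    (h : Fin n → ℝ → ℝ) (s : Fin n → ℝ) (a htilde : Fin n → ℝ)
    (hval : ∀ i, h i (s i) ∈ Set.Ico (0 : ℝ) (1 / n))
    (hafrac : Int.fract (∑ i, a i) = 0)
    (hht : ∀ i, htilde i = Int.fract (h i (s i) + a i)) :
    Int.fract (∑ i, htilde i) = ∑ i, h i (s i) ∧
    ∀ g : ℝ → ℝ, g (Int.fract (∑ i, htilde i)) = g (∑ i, h i (s i)) := by
  have hsum_lt : ∑ i, h i (s i) < 1 :=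
    sum_lt_one_of_lt_inv_card _ fun i => by simpa using (hval i).2
  have hfract : Int.fract (∑ i, htilde i) = ∑ i, h i (s i) :=
    calc Int.fract (∑ i, htilde i)
        = Int.fract (∑ i, Int.fract (h i (s i) + a i)) := by simp only [hht]
      _ = Int.fract (∑ i, h i (s i) + ∑ i, a i) := by
          rw [Int.fract_sum_fract, sum_add_distrib]
      _ = Int.fract (∑ i, h i (s i)) := Int.fract_add_of_fract_eq_zero _ hafrac
      _ = ∑ i, h i (s i) :=
          Int.fract_eq_self.2 ⟨sum_nonneg fun i _ => (hval i).1, hsum_lt⟩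
  exact ⟨hfract, fun g => by rw [hfract]⟩

theorem fract_sum_effective_function_values (n : ℕ) (hn : 1 ≤ n)
    (h : Fin n → ℝ → ℝ) (s : Fin n → ℝ) (a htilde : Fin n → ℝ)
    (hval : ∀ i, h i (s i) ∈ Set.Ico (0 : ℝ) (1 / n))
    (ha : ∀ i, a i ∈ Set.Ico (0 : ℝ) 1)
    (hafrac : Int.fract (∑ i, a i) = 0)
    (hht : ∀ i, htilde i = Int.fract (h i (s i) + a i)) :
    Int.fract (∑ i, htilde i) = ∑ i, h i (s i) ∧
    ∀ g : ℝ → ℝ, g (Int.fract (∑ i, htilde i)) = g (∑ i, h i (s i)) :=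
  fract_sum_effective_function_values_general n h s a htilde hval hafrac hht
end
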